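/- arXiv:1407.6871 — 11 statements merged into one kernel-verified Lean document; each statement's English description precedes it below -/
import Mathlib

section
/- For each integer n ≥ 1, θ_n < 1/α_n and 1/α_n < 1/(nπ). -/
/-!
Writing `α = nπ + π/2 - θ`, the root equation `sin α = α cos α` becomes `cos θ = α sin θ`,
i.e. `tan θ = 1/α`; the claim `θ < 1/α` is then the inequality `θ < tan θ` on `(0, π/2)`.
-/

open Real

lemma sin_nat_mul_pi_add_pi_div_two_sub (n : ℕ) (θ : ℝ) :
    sin (n * π + π / 2 - θ) = (-1) ^ n * cos θ := by
  rw [add_sub_assoc, add_comm, sin_add_nat_mul_pi, sin_pi_div_two_sub]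

lemma cos_nat_mul_pi_add_pi_div_two_sub (n : ℕ) (θ : ℝ) :
    cos (n * π + π / 2 - θ) = (-1) ^ n * sin θ := by
  rw [add_sub_assoc, add_comm, cos_add_nat_mul_pi, cos_pi_div_two_sub]

lemma tan_eq_inv_of_sin_sub_mul_cos_eq_zero {n : ℕ} {θ : ℝ} (hθ : sin θ ≠ 0)
    (h : sin (n * π + π / 2 - θ) - (n * π + π / 2 - θ) * cos (n * π + π / 2 - θ) = 0) :
    tan θ = (n * π + π / 2 - θ)⁻¹ := by
  rw [sin_nat_mul_pi_add_pi_div_two_sub, cos_nat_mul_pi_add_pi_div_two_sub] at h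
  have hcos : cos θ = (n * π + π / 2 - θ) * sin θ := by
    have : (-1 : ℝ) ^ n * (cos θ - (n * π + π / 2 - θ) * sin θ) = 0 := by linear_combination h
    linear_combination (mul_eq_zero.mp this).resolve_left (by positivity)
  rw [tan_eq_sin_div_cos, hcos, div_mul_cancel_right₀ hθ]

theorem theta_lt_inv_alpha (α : ℕ → ℝ)
    (hα : ∀ n : ℕ, 1 ≤ n →
      α n ∈ Set.Ioo (n * Real.pi) (n * Real.pi + Real.pi / 2) ∧
        Real.sin (α n) - α n * Real.cos (α n) = 0)
    (n : ℕ) (hn : 1 ≤ n) :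
    (n * Real.pi + Real.pi / 2 - α n) < 1 / α n ∧ 1 / α n < 1 / (n * Real.pi) := by
  obtain ⟨⟨hlo, hhi⟩, hroot⟩ := hα n hn
  have hnπ : 0 < (n : ℝ) * π := mul_pos (by exact_mod_cast hn) pi_pos
  set θ := n * π + π / 2 - α n with hθ
  have hθ_pos : 0 < θ := by linarith
  have hθ_lt : θ < π / 2 := by linarith
  have hα_eq : α n = n * π + π / 2 - θ := by rw [hθ]; ring
  have htan : tan θ = (α n)⁻¹ := by
    rw [hα_eq] at hroot ⊢
    exact tan_eq_inv_of_sin_sub_mul_cos_eq_zero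
      (sin_pos_of_pos_of_lt_pi hθ_pos (by linarith)).ne' hroot
  constructor
  · rw [one_div, ← htan]
    exact lt_tan hθ_pos hθ_lt
  · exact one_div_lt_one_div_of_lt hnπ hlo
end

section
/- For each integer n ≥ 1, θ_n < ((2n+1)/4)·π − √( (((2n+1)/4)·π)² − 1 ). -/
/-!
Since `x = nπ + π/2 - θ` has `sin x = ± cos θ` and `cos x = ± sin θ` (same sign), the equation
`tan x = x` says `x = cot θ`, and `θ < tan θ` gives `x θ < 1`. With `c = (2n+1)π/4` we have
`x = 2c - θ`, so `θ² - 2cθ + 1 > 0`: `θ` lies outside the roots `c ± √(c² - 1)`, and `θ < π/2 < c`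
puts it below the smaller one.
-/

open Real

lemma mul_sin_eq_cos_of_sin_eq_mul_cos (n : ℕ) (θ : ℝ)
    (h : sin (n * π + π / 2 - θ) = (n * π + π / 2 - θ) * cos (n * π + π / 2 - θ)) :
    (n * π + π / 2 - θ) * sin θ = cos θ := by
  have hx : n * π + π / 2 - θ = (π / 2 - θ) + n * π := by ring
  rw [hx, sin_add_nat_mul_pi, cos_add_nat_mul_pi, sin_pi_div_two_sub, cos_pi_div_two_sub] at h
  have hsign : ((-1 : ℝ) ^ n) ≠ 0 := pow_ne_zero _ (by norm_num)
  rw [hx]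
  apply mul_left_cancel₀ hsign
  linarith

lemma mul_lt_one_of_mul_sin_eq_cos {x θ : ℝ} (hθ : θ ∈ Set.Ioo 0 (π / 2))
    (h : x * sin θ = cos θ) : x * θ < 1 := by
  obtain ⟨hθ0, hθπ⟩ := hθ
  have hsin : 0 < sin θ := sin_pos_of_pos_of_lt_pi hθ0 (by linarith [pi_pos])
  have hcos : 0 < cos θ := cos_pos_of_mem_Ioo ⟨by linarith, hθπ⟩
  have hθcos : θ * cos θ < sin θ := by
    have := lt_tan hθ0 hθπ
    rwa [tan_eq_sin_div_cos, lt_div_iff₀ hcos] at this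
  have : x * θ * sin θ < 1 * sin θ := by
    calc x * θ * sin θ = θ * (x * sin θ) := by ring
      _ = θ * cos θ := by rw [h]
      _ < 1 * sin θ := by linarith
  exact lt_of_mul_lt_mul_right this hsin.le

lemma lt_sub_sqrt_sq_sub_one_of_mul_lt_one {c θ : ℝ} (hθc : θ < c)
    (h : (2 * c - θ) * θ < 1) : θ < c - √(c ^ 2 - 1) := by
  have hsqrt : √(c ^ 2 - 1) < c - θ := by
    rw [sqrt_lt' (by linarith)]
    nlinarith
  linarith

theorem theta_lt_sqrt (α : ℕ → ℝ)
    (hα : ∀ n : ℕ, 1 ≤ n →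
      α n ∈ Set.Ioo (n * Real.pi) (n * Real.pi + Real.pi / 2) ∧
        Real.sin (α n) - α n * Real.cos (α n) = 0)
    (n : ℕ) (hn : 1 ≤ n) :
    (n * Real.pi + Real.pi / 2 - α n) <
      ((2 * n + 1) / 4) * Real.pi -
        Real.sqrt ((((2 * n + 1) / 4) * Real.pi) ^ 2 - 1) := by
  obtain ⟨⟨hα_lo, hα_hi⟩, hφ⟩ := hα n hn
  set θ := n * π + π / 2 - α n
  have hαθ : α n = n * π + π / 2 - θ := by ring
  have hθ : θ ∈ Set.Ioo 0 (π / 2) := ⟨by linarith, by linarith⟩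
  have hcot : α n * sin θ = cos θ := by
    rw [hαθ] at hφ ⊢
    exact mul_sin_eq_cos_of_sin_eq_mul_cos n θ (by linarith)
  have hαθ_lt : α n * θ < 1 := mul_lt_one_of_mul_sin_eq_cos hθ hcot
  have hn' : (1 : ℝ) ≤ n := by exact_mod_cast hn
  apply lt_sub_sqrt_sq_sub_one_of_mul_lt_one
  · nlinarith [hθ.2, pi_pos]
  · convert hαθ_lt using 2
    rw [hαθ]
    ring
end

section
/- For each integer n ≥ 1, θ_n > arcsin(1/(nπ + π/2)); in particular θ_n > sin θ_n > 1/(nπ + π/2). -/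
/-!
Put `θ = nπ + π/2 - α`. Since `sin (nπ + π/2) = ±1` and `cos (nπ + π/2) = 0`, the equation
`sin α = α cos α` becomes `cos θ = α sin θ`, hence
`(nπ + π/2) sin θ = (α + θ) sin θ = cos θ + θ sin θ`. On `(0, π/2]` the right-hand side exceeds
`cos² θ + sin² θ = 1` because `θ > sin θ > 0` and `0 ≤ cos θ ≤ 1`. So `sin θ > 1/(nπ + π/2)`, which
gives all three inequalities.
-/

open Real

theorem cos_sub_mul_sin_nat_mul_pi_add_pi_div_two_sub (n : ℕ) (x : ℝ) :
    cos (n * π + π / 2 - x) - x * sin (n * π + π / 2 - x) = (-1) ^ n * (sin x - x * cos x) := by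
  rw [cos_sub, sin_sub, cos_add_pi_div_two, sin_add_pi_div_two, sin_nat_mul_pi, cos_nat_mul_pi]
  ring

theorem cos_eq_mul_sin_nat_mul_pi_add_pi_div_two_sub {x : ℝ} (hx : sin x - x * cos x = 0)
    (n : ℕ) : cos (n * π + π / 2 - x) = x * sin (n * π + π / 2 - x) := by
  rw [← sub_eq_zero, cos_sub_mul_sin_nat_mul_pi_add_pi_div_two_sub, hx, mul_zero]

theorem one_lt_cos_add_mul_sin {θ : ℝ} (h₀ : 0 < θ) (h₁ : θ ≤ π / 2) : 1 < cos θ + θ * sin θ := by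
  have hsin : 0 < sin θ := sin_pos_of_pos_of_lt_pi h₀ (by linarith [pi_pos])
  have hcos : 0 ≤ cos θ := cos_nonneg_of_mem_Icc ⟨by linarith, h₁⟩
  calc 1 = cos θ ^ 2 + sin θ ^ 2 := (cos_sq_add_sin_sq θ).symm
    _ ≤ cos θ + sin θ * sin θ := by nlinarith [cos_le_one θ]
    _ < cos θ + θ * sin θ := by gcongr; exact sin_lt h₀

theorem theta_gt_arcsin (α : ℕ → ℝ)
    (hα : ∀ n : ℕ, 1 ≤ n →
      α n ∈ Set.Ioo (n * Real.pi) (n * Real.pi + Real.pi / 2) ∧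
        Real.sin (α n) - α n * Real.cos (α n) = 0)
    (n : ℕ) (hn : 1 ≤ n) :
    Real.arcsin (1 / (n * Real.pi + Real.pi / 2)) < (n * Real.pi + Real.pi / 2 - α n) ∧
      Real.sin (n * Real.pi + Real.pi / 2 - α n) < (n * Real.pi + Real.pi / 2 - α n) ∧
        1 / (n * Real.pi + Real.pi / 2) < Real.sin (n * Real.pi + Real.pi / 2 - α n) := by
  obtain ⟨⟨hα_gt, hα_lt⟩, hφ⟩ := hα n hn
  set θ := n * π + π / 2 - α n with hθ
  have hθ_pos : 0 < θ := by linarith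
  have hθ_lt : θ < π / 2 := by linarith
  have hsin_gt : 1 / (n * π + π / 2) < sin θ := by
    have hcos : cos θ = α n * sin θ := cos_eq_mul_sin_nat_mul_pi_add_pi_div_two_sub hφ n
    have hM : n * π + π / 2 = α n + θ := by ring
    rw [div_lt_iff₀ (by positivity), hM]
    linarith [one_lt_cos_add_mul_sin hθ_pos hθ_lt.le]
  refine ⟨?_, sin_lt hθ_pos, hsin_gt⟩
  rwa [arcsin_lt_iff_lt_sin' ⟨by linarith, hθ_lt.le⟩]
end

section
/- For each integer n ≥ 1, 0 < θ_n − θ_{n+1} < π/(α_n · α_{n+1}). -/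
/-!
Substituting `α_n = n π + π / 2 - θ_n` turns `sin α_n = α_n cos α_n` into `cos θ_n = α_n sin θ_n`,
so `θ_n = arctan (1 / α_n)`.
The subtraction formula for `arctan` then gives `δ = θ_n - θ_{n+1} = arctan ((α_{n+1} - α_n) / (α_n α_{n+1} + 1))`,
and `α_{n+1} - α_n = π + δ` by definition of the `θ`'s. Hence `0 < δ < (π + δ) / (α_n α_{n+1} + 1)`
by `arctan x < x`, which rearranges to `δ α_n α_{n+1} < π`.
-/

open Real

namespace Real

theorem arctan_lt_self {x : ℝ} (hx : 0 < x) : arctan x < x := by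
  simpa only [tan_arctan] using lt_tan (arctan_pos.2 hx) (arctan_lt_pi_div_two x)

theorem arctan_inv_sub_arctan_inv {a b : ℝ} (ha : 0 < a) (hb : 0 < b) :
    arctan a⁻¹ - arctan b⁻¹ = arctan ((b - a) / (a * b + 1)) := by
  have hprod : a⁻¹ * -b⁻¹ < 1 := by
    have : 0 < a⁻¹ * b⁻¹ := by positivity
    linarith [neg_mul_eq_mul_neg a⁻¹ b⁻¹]
  rw [sub_eq_add_neg, ← arctan_neg, arctan_add hprod]
  congr 1
  rw [div_eq_div_iff (sub_pos.2 hprod).ne' (by positivity)]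
  field_simp
  ring

theorem int_mul_pi_add_pi_div_two_sub_eq_arctan_inv {a : ℝ} (k : ℤ)
    (ha : a ∈ Set.Ioo (k * π) (k * π + π / 2)) (h : sin a - a * cos a = 0) :
    k * π + π / 2 - a = arctan a⁻¹ := by
  set θ := k * π + π / 2 - a with hθ
  have hθ_mem : θ ∈ Set.Ioo (-(π / 2)) (π / 2) :=
    ⟨by linarith [ha.2, pi_pos], by linarith [ha.1]⟩
  have hsin_pos : 0 < sin θ :=
    sin_pos_of_pos_of_lt_pi (by linarith [ha.2]) (by linarith [hθ_mem.2, pi_pos])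
  have hcos_eq : cos θ = a * sin θ := by
    have ha_eq : a = k * π - (θ - π / 2) := by ring
    rw [ha_eq, sin_int_mul_pi_sub, cos_int_mul_pi_sub, sin_sub_pi_div_two, cos_sub_pi_div_two,
      ← ha_eq] at h
    have hsign : ((-1 : ℝ) ^ k) ≠ 0 := zpow_ne_zero k (by norm_num)
    apply mul_left_cancel₀ hsign
    linarith
  have ha0 : a ≠ 0 := by
    rintro rfl
    exact (cos_pos_of_mem_Ioo hθ_mem).ne' (by simpa using hcos_eq)
  refine (arctan_eq_of_tan_eq ?_ hθ_mem).symm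
  rw [tan_eq_sin_div_cos, hcos_eq]
  field_simp

end Real

theorem theta_diff (α : ℕ → ℝ)
    (hα : ∀ n : ℕ, 1 ≤ n →
      α n ∈ Set.Ioo (n * Real.pi) (n * Real.pi + Real.pi / 2) ∧
        Real.sin (α n) - α n * Real.cos (α n) = 0)
    (n : ℕ) (hn : 1 ≤ n) :
    0 < (n * Real.pi + Real.pi / 2 - α n) - ((n + 1) * Real.pi + Real.pi / 2 - α (n + 1)) ∧
      (n * Real.pi + Real.pi / 2 - α n) - ((n + 1) * Real.pi + Real.pi / 2 - α (n + 1)) <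
        Real.pi / (α n * α (n + 1)) := by
  have hθ (m : ℕ) (hm : 1 ≤ m) : (m : ℝ) * π + π / 2 - α m = arctan (α m)⁻¹ := by
    obtain ⟨hmem, hφ⟩ := hα m hm
    exact_mod_cast int_mul_pi_add_pi_div_two_sub_eq_arctan_inv m (by exact_mod_cast hmem) hφ
  have hθa := hθ n hn
  have hθb : ((n : ℝ) + 1) * π + π / 2 - α (n + 1) = arctan (α (n + 1))⁻¹ := by
    exact_mod_cast hθ (n + 1) (by omega)
  have ha := (hα n hn).1
  have hb := (hα (n + 1) (by omega)).1
  push_cast at hb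
  set a := α n
  set b := α (n + 1)
  have ha0 : 0 < a := (mul_pos (by exact_mod_cast hn) pi_pos).trans ha.1
  have hab : a < b := by linarith [ha.2, hb.1, pi_pos]
  have hb0 : 0 < b := ha0.trans hab
  set δ := (n * π + π / 2 - a) - ((n + 1) * π + π / 2 - b)
  have hδ : δ = arctan a⁻¹ - arctan b⁻¹ := by rw [← hθa, ← hθb]
  have hδ_pos : 0 < δ := by
    rw [hδ, sub_pos]
    exact arctan_strictMono (inv_strictAnti₀ ha0 hab)
  have hδ_eq : δ = arctan ((π + δ) / (a * b + 1)) := by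
    rw [show π + δ = b - a by ring, ← arctan_inv_sub_arctan_inv ha0 hb0, hδ]
  have hδ_lt : δ * (a * b + 1) < π + δ := by
    rw [← lt_div_iff₀ (by positivity)]
    conv_lhs => rw [hδ_eq]
    exact arctan_lt_self (by positivity)
  refine ⟨hδ_pos, ?_⟩
  rw [lt_div_iff₀ (by positivity)]
  linarith
end

section
/- For each integer n ≥ 1, define C_n = ((α_{n+1} − α_n)²/(π²·α_n²·α_{n+1}²)) · [ (α_{n+1}⁵ − α_n⁵)/10 + ((α_{n+1} − α_n)/4)·(1 + (α_{n+1}·α_n − 1)/((1 + α_{n+1}²)(1 + α_n²))) ]. Then C_n < 2 for every integer n ≥ 2, and C_1 < 2.26. -/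
/-!
On `(nπ, nπ + π/2)` the equation `sin t = t cos t` says `tan t = t`, i.e. `α_n - arctan α_n = nπ`.
Since `t ↦ t - arctan t` is increasing, `arctan t = π/2 - arctan t⁻¹` for `t > 0`, and
`u - u³/3 ≤ arctan u ≤ u - u³/3 + u⁵/5` for `u ≥ 0`, this locates `α_1` and `α_2` to within
`10⁻⁴`, gives `α_n > 7.72` for `n ≥ 2`, and bounds the gap
`α_{n+1} - α_n = π + arctan α_n⁻¹ - arctan α_{n+1}⁻¹` by `3.2`.
For `(a, b) = (α_n, α_{n+1})`, `d = b - a` and `s = b/a + a/b` one has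
`C_n = d³/π² · ((s² + s - 1)/10 + (1 + r)/(4a²b²))` with `r ≤ 1`, and `s` increases with
`b/a ≤ 1 + d/a`, so `C_n` is bounded in terms of these enclosures. As `C_1 ≈ 2.2563`, the
enclosures of `α_1` and `α_2` must be that sharp.
-/

open Real Set

theorem monotone_sub_arctan : Monotone fun x : ℝ => x - arctan x := by
  refine monotone_of_hasDerivAt_nonneg (f' := fun x => x ^ 2 / (1 + x ^ 2)) (fun x => ?_)
    fun x => by positivity
  exact ((hasDerivAt_id' x).sub (hasDerivAt_arctan x)).congr_deriv (by field_simp; ring)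

theorem arctan_le_self {x : ℝ} (hx : 0 ≤ x) : arctan x ≤ x := by
  simpa using monotone_sub_arctan hx

theorem sub_pow_three_div_three_le_arctan {x : ℝ} (hx : 0 ≤ x) : x - x ^ 3 / 3 ≤ arctan x := by
  have hmono : Monotone fun x : ℝ => arctan x - (x - x ^ 3 / 3) := by
    refine monotone_of_hasDerivAt_nonneg (f' := fun x => x ^ 4 / (1 + x ^ 2)) (fun x => ?_)
      fun x => by positivity
    exact ((hasDerivAt_arctan x).sub ((hasDerivAt_id' x).sub
      ((hasDerivAt_pow 3 x).div_const 3))).congr_deriv (by field_simp; ring)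
  simpa using hmono hx

theorem arctan_le_sub_pow_three_div_three_add_pow_five_div_five {x : ℝ} (hx : 0 ≤ x) :
    arctan x ≤ x - x ^ 3 / 3 + x ^ 5 / 5 := by
  have hmono : Monotone fun x : ℝ => x - x ^ 3 / 3 + x ^ 5 / 5 - arctan x := by
    refine monotone_of_hasDerivAt_nonneg (f' := fun x => x ^ 6 / (1 + x ^ 2)) (fun x => ?_)
      fun x => by positivity
    exact ((((hasDerivAt_id' x).sub ((hasDerivAt_pow 3 x).div_const 3)).add
      ((hasDerivAt_pow 5 x).div_const 5)).sub (hasDerivAt_arctan x)).congr_deriv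
      (by field_simp; ring)
  simpa using hmono hx

theorem sub_arctan_eq_of_sin_sub_mul_cos_eq_zero {k : ℤ} {x : ℝ}
    (hx : x ∈ Ioo (k * π) (k * π + π / 2)) (h : sin x - x * cos x = 0) :
    x - arctan x = k * π := by
  have hcos : cos x ≠ 0 := fun h0 => by
    have := sin_sq_add_cos_sq x
    simp_all
  have htan : tan (x - k * π) = x := by
    rw [tan_sub_int_mul_pi, tan_eq_sin_div_cos, div_eq_iff hcos]
    linarith
  have := arctan_eq_of_tan_eq htan ⟨by linarith [hx.1, pi_pos], by linarith [hx.2]⟩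
  linarith

section SubArctanEq

variable {x c : ℝ}

theorem lower_bound_of_sub_arctan_eq {L : ℝ} (hx : x - arctan x = c) (hL : 0 < L)
    (h : L + (L⁻¹ - L⁻¹ ^ 3 / 3 + L⁻¹ ^ 5 / 5) < c + π / 2) : L < x := by
  by_contra! hxL
  have hψ : x - arctan x ≤ L - arctan L := monotone_sub_arctan hxL
  have := arctan_inv_of_pos hL
  have := arctan_le_sub_pow_three_div_three_add_pow_five_div_five (inv_nonneg.2 hL.le)
  linarith

theorem upper_bound_of_sub_arctan_eq {U : ℝ} (hx : x - arctan x = c) (hU : 0 < U)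
    (h : c + π / 2 < U + (U⁻¹ - U⁻¹ ^ 3 / 3)) : x < U := by
  by_contra! hUx
  have hψ : U - arctan U ≤ x - arctan x := monotone_sub_arctan hUx
  have := arctan_inv_of_pos hU
  have := sub_pow_three_div_three_le_arctan (inv_nonneg.2 hU.le)
  linarith

end SubArctanEq

theorem sub_le_of_sub_arctan_sub_eq_pi {a b A D : ℝ} (hA : 1 < A) (ha : A ≤ a) (hab : a < b)
    (h : (b - arctan b) - (a - arctan a) = π)
    (hD : π + (A ^ 3)⁻¹ / 3 ≤ D * (1 - (A ^ 2)⁻¹)) : b - a ≤ D := by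
  have ha0 : 0 < a := by linarith
  have hb0 : 0 < b := ha0.trans hab
  have hgap : b - a = π + arctan a⁻¹ - arctan b⁻¹ := by
    rw [arctan_inv_of_pos ha0, arctan_inv_of_pos hb0]; linarith
  have h₁ := arctan_le_self (inv_nonneg.2 ha0.le)
  have h₂ := sub_pow_three_div_three_le_arctan (inv_nonneg.2 hb0.le)
  have h₃ : a⁻¹ - b⁻¹ ≤ (b - a) * (A ^ 2)⁻¹ := by
    rw [inv_sub_inv ha0.ne' hb0.ne', div_eq_mul_inv]
    gcongr
    nlinarith
  have h₄ : b⁻¹ ^ 3 ≤ (A ^ 3)⁻¹ := by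
    rw [inv_pow]; gcongr; linarith
  have hA2 : 0 < 1 - (A ^ 2)⁻¹ := by
    rw [sub_pos, inv_lt_one₀ (by positivity)]; nlinarith
  refine le_of_mul_le_mul_right ?_ hA2
  linarith

theorem add_inv_le_add_inv {t T : ℝ} (ht : 1 ≤ t) (htT : t ≤ T) : t + t⁻¹ ≤ T + T⁻¹ := by
  have hT : 0 < T := by linarith
  rw [← sub_nonneg, show T + T⁻¹ - (t + t⁻¹) = (T - t) * (t * T - 1) / (t * T) by
    field_simp; ring]
  exact div_nonneg (mul_nonneg (by linarith) (by nlinarith)) (by positivity)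

noncomputable def cCoeff (a b : ℝ) : ℝ :=
  (b - a) ^ 2 / (π ^ 2 * a ^ 2 * b ^ 2) *
    ((b ^ 5 - a ^ 5) / 10 + (b - a) / 4 * (1 + (b * a - 1) / ((1 + b ^ 2) * (1 + a ^ 2))))

theorem cCoeff_eq_pow_three_mul {a b : ℝ} (ha : a ≠ 0) (hb : b ≠ 0) :
    cCoeff a b = (b - a) ^ 3 / π ^ 2 * (((b / a + a / b) ^ 2 + (b / a + a / b) - 1) / 10 +
      (1 + (b * a - 1) / ((1 + b ^ 2) * (1 + a ^ 2))) / (4 * a ^ 2 * b ^ 2)) := by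
  unfold cCoeff
  field_simp
  ring

theorem cCoeff_le {a b A B D S P : ℝ} (hA : 0 < A) (ha : A ≤ a) (hB : 0 < B) (hb : B ≤ b)
    (hab : a ≤ b) (hD : b - a ≤ D) (hS : (1 + D / A) + (1 + D / A)⁻¹ ≤ S)
    (hP : 0 < P) (hPπ : P ≤ π) :
    cCoeff a b ≤ D ^ 3 / P ^ 2 * ((S ^ 2 + S - 1) / 10 + 2 / (4 * A ^ 2 * B ^ 2)) := by
  have ha0 : 0 < a := hA.trans_le ha
  have hb0 : 0 < b := hB.trans_le hb
  have hD0 : 0 ≤ D := by linarith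
  have hs₁ : 1 ≤ b / a + a / b :=
    le_add_of_le_of_nonneg ((one_le_div ha0).2 hab) (by positivity)
  have hsS : b / a + a / b ≤ S := by
    refine le_trans ?_ hS
    rw [← inv_div b a]
    refine add_inv_le_add_inv ((one_le_div ha0).2 hab) ?_
    have : D ≤ D * a / A := by rw [le_div_iff₀ hA]; nlinarith
    rw [div_le_iff₀ ha0, add_mul, one_mul, div_mul_eq_mul_div]
    linarith
  have hr₁ : (b * a - 1) / ((1 + b ^ 2) * (1 + a ^ 2)) ≤ 1 := by
    rw [div_le_one (by positivity)]
    nlinarith [sq_nonneg (a - b), sq_nonneg (a * b)]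
  have hr₀ : -1 ≤ (b * a - 1) / ((1 + b ^ 2) * (1 + a ^ 2)) := by
    rw [le_div_iff₀ (by positivity)]
    nlinarith [mul_pos ha0 hb0, mul_pos (mul_pos ha0 hb0) (mul_pos ha0 hb0)]
  rw [cCoeff_eq_pow_three_mul ha0.ne' hb0.ne']
  gcongr
  · exact add_nonneg (div_nonneg (by nlinarith) (by norm_num))
      (div_nonneg (by linarith) (by positivity))
  · linarith

theorem cCoeff_lt_two {a b : ℝ} (ha : 7.72 ≤ a) (hab : a ≤ b) (hgap : b - a ≤ 3.2) :
    cCoeff a b < 2 :=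
  (cCoeff_le (S := 2.1215) (P := 3.141592) (by norm_num) ha (by norm_num) (ha.trans hab) hab hgap
    (by norm_num) (by norm_num) pi_gt_d6.le).trans_lt (by norm_num)

theorem cCoeff_lt_two_point_two_six {a b : ℝ} (ha : 4.4933 ≤ a) (hab : a ≤ b)
    (hb : b ∈ Icc 7.7252 7.7253) : cCoeff a b < 2.26 :=
  (cCoeff_le (D := 3.232) (S := 2.30093) (P := 3.141592) (by norm_num) ha (by norm_num) hb.1
    hab (by linarith [hb.2]) (by norm_num) (by norm_num)
    pi_gt_d6.le).trans_lt (by norm_num)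

theorem C_n_bound (α : ℕ → ℝ)
    (hα : ∀ n : ℕ, 1 ≤ n →
      α n ∈ Set.Ioo (n * Real.pi) (n * Real.pi + Real.pi / 2) ∧
        Real.sin (α n) - α n * Real.cos (α n) = 0)
    (C : ℕ → ℝ)
    (hC : ∀ n : ℕ, 1 ≤ n →
      C n = ((α (n + 1) - α n) ^ 2 / (Real.pi ^ 2 * (α n) ^ 2 * (α (n + 1)) ^ 2)) *
        (((α (n + 1)) ^ 5 - (α n) ^ 5) / 10 +
          ((α (n + 1) - α n) / 4) *
            (1 + (α (n + 1) * α n - 1) / ((1 + (α (n + 1)) ^ 2) * (1 + (α n) ^ 2))))) :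
    (∀ n : ℕ, 2 ≤ n → C n < 2) ∧ C 1 < 2.26 := by
  have hCc : ∀ n, 1 ≤ n → C n = cCoeff (α n) (α (n + 1)) := hC
  have hψ : ∀ n : ℕ, 1 ≤ n → α n - arctan (α n) = n * π := fun n hn => by
    obtain ⟨hmem, heq⟩ := hα n hn
    exact_mod_cast sub_arctan_eq_of_sin_sub_mul_cos_eq_zero (k := n) (by exact_mod_cast hmem) heq
  have hψ_succ : ∀ n : ℕ, 1 ≤ n →
      (α (n + 1) - arctan (α (n + 1))) - (α n - arctan (α n)) = π := fun n hn => by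
    rw [hψ (n + 1) (by omega), hψ n hn]; push_cast; ring
  have hmono : ∀ n : ℕ, 1 ≤ n → α n < α (n + 1) := fun n hn =>
    monotone_sub_arctan.reflect_lt (by linarith [hψ_succ n hn, pi_pos])
  have hπ_gt := pi_gt_d6
  have hπ_lt := pi_lt_d6
  refine ⟨fun n hn => ?_, ?_⟩
  · have hn' : (2 : ℝ) ≤ n := by exact_mod_cast hn
    have ha : 7.72 < α n :=
      lower_bound_of_sub_arctan_eq (hψ n (by omega)) (by norm_num) (by norm_num; nlinarith)
    have hab := hmono n (by omega)
    rw [hCc n (by omega)]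
    exact cCoeff_lt_two ha.le hab.le <| sub_le_of_sub_arctan_sub_eq_pi (by norm_num) ha.le hab
      (hψ_succ n (by omega)) (by norm_num; linarith)
  · have ha : 4.4933 < α 1 :=
      lower_bound_of_sub_arctan_eq (hψ 1 le_rfl) (by norm_num) (by norm_num; linarith)
    have hb₀ : 7.7252 < α 2 :=
      lower_bound_of_sub_arctan_eq (hψ 2 (by norm_num)) (by norm_num) (by norm_num; linarith)
    have hb₁ : α 2 < 7.7253 :=
      upper_bound_of_sub_arctan_eq (hψ 2 (by norm_num)) (by norm_num) (by norm_num; linarith)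
    rw [hCc 1 le_rfl]
    exact cCoeff_lt_two_point_two_six ha.le (hmono 1 le_rfl).le ⟨hb₀.le, hb₁.le⟩
end

section
/- For each integer n ≥ 1, the integral ∫ from α_n to α_{n+1} of u⁴·(sin u)² du equals (α_{n+1}⁵ − α_n⁵)/10 + ((α_{n+1} − α_n)/4)·(1 + (α_{n+1}·α_n − 1)/((1 + α_{n+1}²)(1 + α_n²))). -/
/-!
Integrating by parts four times, `u ^ 4 * sin u ^ 2` has the explicit antiderivative
`antiderivPowFourMulSinSq`. At a root `a` of `sin a = a * cos a` one has `cos a ^ 2 = 1 / (1 + a ^ 2)`,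
so the trigonometric terms of the antiderivative collapse to `a ^ 3 / (4 * (1 + a ^ 2))`;
the rest is rational-function algebra.
-/

open Real

noncomputable def antiderivPowFourMulSinSq (u : ℝ) : ℝ :=
  u ^ 5 / 10 - u ^ 4 * (sin u * cos u) / 2 - u ^ 3 * (1 - 2 * sin u ^ 2) / 2
    + 3 / 2 * u ^ 2 * (sin u * cos u) + 3 / 4 * u * (1 - 2 * sin u ^ 2)
    - 3 / 4 * (sin u * cos u)

theorem hasDerivAt_antiderivPowFourMulSinSq (u : ℝ) :
    HasDerivAt antiderivPowFourMulSinSq (u ^ 4 * sin u ^ 2) u := by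
  have hsc := (hasDerivAt_sin u).mul (hasDerivAt_cos u)
  have hcos2 : HasDerivAt (fun x => 1 - 2 * sin x ^ 2) (-(2 * (2 * sin u ^ 1 * cos u))) u := by
    simpa using (((hasDerivAt_sin u).pow 2).const_mul 2).const_sub 1
  have H := ((((((hasDerivAt_pow 5 u).div_const 10).sub
      (((hasDerivAt_pow 4 u).mul hsc).div_const 2)).sub
      (((hasDerivAt_pow 3 u).mul hcos2).div_const 2)).add
      (((hasDerivAt_pow 2 u).const_mul (3 / 2 : ℝ)).mul hsc)).add
      (((hasDerivAt_id u).const_mul (3 / 4 : ℝ)).mul hcos2)).sub (hsc.const_mul (3 / 4 : ℝ))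
  refine H.congr_deriv ?_
  simp only [pow_one, id_eq, Pi.mul_apply]
  linear_combination -(u ^ 4 / 2 - 3 / 2 * u ^ 2 + 3 / 4) * sin_sq_add_cos_sq u

theorem integral_pow_four_mul_sin_sq (a b : ℝ) :
    ∫ u in a..b, u ^ 4 * sin u ^ 2 =
      antiderivPowFourMulSinSq b - antiderivPowFourMulSinSq a :=
  intervalIntegral.integral_eq_sub_of_hasDerivAt
    (fun u _ => hasDerivAt_antiderivPowFourMulSinSq u)
    ((by fun_prop : Continuous fun u : ℝ => u ^ 4 * sin u ^ 2).intervalIntegrable a b)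

theorem cos_sq_of_sin_eq_mul_cos {a : ℝ} (h : sin a = a * cos a) :
    cos a ^ 2 = 1 / (1 + a ^ 2) := by
  rw [eq_div_iff (by positivity)]
  linear_combination sin_sq_add_cos_sq a - (sin a + a * cos a) * h

theorem antiderivPowFourMulSinSq_of_sin_eq_mul_cos {a : ℝ} (h : sin a = a * cos a) :
    antiderivPowFourMulSinSq a = a ^ 5 / 10 + a ^ 3 / (4 * (1 + a ^ 2)) := by
  have hcos := cos_sq_of_sin_eq_mul_cos h
  simp only [antiderivPowFourMulSinSq, h]
  ring_nf
  rw [hcos]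
  field_simp
  ring

theorem integral_eval (α : ℕ → ℝ)
    (hα : ∀ n : ℕ, 1 ≤ n →
      α n ∈ Set.Ioo (n * Real.pi) (n * Real.pi + Real.pi / 2) ∧
        Real.sin (α n) - α n * Real.cos (α n) = 0)
    (n : ℕ) (hn : 1 ≤ n) :
    ∫ u in (α n)..(α (n + 1)), u ^ 4 * Real.sin u ^ 2 =
      ((α (n + 1)) ^ 5 - (α n) ^ 5) / 10 +
        ((α (n + 1) - α n) / 4) *
          (1 + (α (n + 1) * α n - 1) / ((1 + (α (n + 1)) ^ 2) * (1 + (α n) ^ 2))) := by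
  have root : ∀ m, 1 ≤ m → sin (α m) = α m * cos (α m) :=
    fun m hm => sub_eq_zero.mp (hα m hm).2
  rw [integral_pow_four_mul_sin_sq, antiderivPowFourMulSinSq_of_sin_eq_mul_cos (root n hn),
    antiderivPowFourMulSinSq_of_sin_eq_mul_cos (root (n + 1) (by omega))]
  have : (1 : ℝ) + α n ^ 2 ≠ 0 := by positivity
  have : (1 : ℝ) + α (n + 1) ^ 2 ≠ 0 := by positivity
  field_simp
  ring
end

section
/- For each integer n ≥ 2 and all x, y in the closed interval [1/α_{n+1}, 1/α_n], |x·sin(1/x) − y·sin(1/y)| ≤ √(2·|y − x|). -/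
/-!
With `u = 1/x` and `w = 1/y`, the claim is `(w sin u - u sin w)² ≤ 2 (u - w) u w`. The only input
about the sine is `(sin u - sin w)² ≤ 2 (1 - cos (u - w)) ≤ 9/5 (u - w)`; once `w ≥ 5` the rest
is absorbed by the factor `u = w + (u - w)`. The interval `[1/α_{n+1}, 1/α_n]` lies in `(0, 1/5]`
because `α_n > 2π > 5` for `n ≥ 2`.
-/

namespace Real

lemma one_sub_cos_le_mul {x : ℝ} (hx : 0 ≤ x) : 1 - cos x ≤ 9 / 10 * x := by
  rcases le_total x 1 with hx1 | hx1
  · nlinarith [one_sub_sq_div_two_le_cos (x := x)]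
  have hcos1 : 1 / 2 ≤ cos 1 := by linarith [one_sub_sq_div_two_le_cos (x := 1)]
  have hlip : cos 1 - cos x ≤ x - 1 := by
    have := abs_cos_sub_cos_le 1 x
    rw [abs_sub_comm 1 x, abs_of_nonneg (sub_nonneg.2 hx1)] at this
    exact (abs_le.1 this).2
  rcases le_total x 5 with hx5 | hx5
  · linarith
  · linarith [neg_one_le_cos x]

lemma sq_sin_sub_sin_le (u w : ℝ) : (sin u - sin w) ^ 2 ≤ 2 * (1 - cos (u - w)) := by
  nlinarith [cos_sub u w, sin_sq_add_cos_sq u, sin_sq_add_cos_sq w, sq_nonneg (cos u - cos w)]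

lemma sq_sin_sub_sin_le_mul_sub {u w : ℝ} (hwu : w ≤ u) :
    (sin u - sin w) ^ 2 ≤ 9 / 5 * (u - w) := by
  linarith [sq_sin_sub_sin_le u w, one_sub_cos_le_mul (sub_nonneg.2 hwu)]

lemma sq_mul_sin_sub_mul_sin_le {u w : ℝ} (hw : 5 ≤ w) (hwu : w ≤ u) :
    (w * sin u - u * sin w) ^ 2 ≤ 2 * (u - w) * u * w := by
  set h := u - w
  set s := sin u - sin w
  have hnum : w * sin u - u * sin w = w * s - h * sin w := by ring
  have hu : u = w + h := by ring
  have hs : s ^ 2 ≤ 9 / 5 * h := sq_sin_sub_sin_le_mul_sub hwu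
  rw [hnum, hu]
  -- `2 w s h sin w ≤ w²s²/9 + 9 h² sin² w`, and `10 h² ≤ 2 w h²` since `w ≥ 5`.
  nlinarith [sq_nonneg (w * s / 3 + 3 * h * sin w), sq_nonneg (w * s / 3 - 3 * h * sin w),
    mul_le_mul_of_nonneg_left hs (sq_nonneg w),
    mul_le_mul_of_nonneg_left (sin_sq_le_one w) (sq_nonneg h),
    mul_nonneg (sub_nonneg.2 hw) (sq_nonneg h)]

lemma sq_sin_div_sub_sin_div_le {u w : ℝ} (hw : 5 ≤ w) (hwu : w ≤ u) :
    (sin u / u - sin w / w) ^ 2 ≤ 2 * (1 / w - 1 / u) := by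
  have hw0 : 0 < w := by linarith
  have hu0 : 0 < u := by linarith
  have hdiff : sin u / u - sin w / w = (w * sin u - u * sin w) / (u * w) := by
    field_simp
  have hrhs : 2 * (1 / w - 1 / u) = 2 * (u - w) * u * w / (u * w) ^ 2 := by
    field_simp
  rw [hdiff, hrhs, div_pow]
  exact div_le_div_of_nonneg_right (sq_mul_sin_sub_mul_sin_le hw hwu) (by positivity)

lemma abs_mul_sin_one_div_sub_le_sqrt {x y : ℝ} (hx : x ∈ Set.Ioc 0 (1 / 5))
    (hy : y ∈ Set.Ioc 0 (1 / 5)) :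
    |x * sin (1 / x) - y * sin (1 / y)| ≤ √(2 * |y - x|) := by
  wlog hxy : x ≤ y generalizing x y
  · rw [abs_sub_comm, abs_sub_comm y]
    exact this hy hx (le_of_not_ge hxy)
  have key := sq_sin_div_sub_sin_div_le (u := 1 / x) (w := 1 / y)
    ((le_one_div (by norm_num) hy.1).2 hy.2) (one_div_le_one_div_of_le hx.1 hxy)
  simp only [div_div_eq_mul_div, div_one, one_mul] at key
  rw [abs_of_nonneg (sub_nonneg.2 hxy), mul_comm x, mul_comm y]
  exact abs_le_sqrt key

end Real

theorem holder_on_interval (α : ℕ → ℝ)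
    (hα : ∀ n : ℕ, 1 ≤ n →
      α n ∈ Set.Ioo (n * Real.pi) (n * Real.pi + Real.pi / 2) ∧
        Real.sin (α n) - α n * Real.cos (α n) = 0)
    (n : ℕ) (hn : 2 ≤ n)
    (x y : ℝ) (hx : x ∈ Set.Icc (1 / α (n + 1)) (1 / α n))
    (hy : y ∈ Set.Icc (1 / α (n + 1)) (1 / α n)) :
    |x * Real.sin (1 / x) - y * Real.sin (1 / y)| ≤ Real.sqrt (2 * |y - x|) := by
  obtain ⟨⟨hαn, -⟩, -⟩ := hα n (by omega)
  obtain ⟨⟨hαn₁, -⟩, -⟩ := hα (n + 1) (by omega)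
  have hn' : (2 : ℝ) ≤ n := by exact_mod_cast hn
  have hαn_ge : 5 ≤ α n := by nlinarith [Real.pi_gt_three]
  have hαn₁_pos : 0 < α (n + 1) := lt_trans (by positivity) hαn₁
  have hsub : Set.Icc (1 / α (n + 1)) (1 / α n) ⊆ Set.Ioc 0 (1 / 5) := fun z hz =>
    ⟨lt_of_lt_of_le (by positivity) hz.1,
      hz.2.trans (one_div_le_one_div_of_le (by norm_num) hαn_ge)⟩
  exact Real.abs_mul_sin_one_div_sub_le_sqrt (hsub hx) (hsub hy)
end

section
/- For all x, y in the closed interval [1/α_2, 1/α_1], |x·sin(1/x) − y·sin(1/y)| ≤ √(2.26·|y − x|). -/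
/-!
With `φ t = sin t - t cos t` we have `d/dt (t sin (1/t)) = φ(1/t)` and `φ' t = t sin t`, so on
`[α₁, α₂]` the function `φ` decreases from `0` to `φ(2π) = -2π` and then increases back to `0`.
Hence `f x = x sin (1/x)` is decreasing and `2π`-Lipschitz on `[1/α₂, 1/α₁]`, with oscillation
`f(1/α₂) - f(1/α₁) = cos α₂ - cos α₁` there. Multiplying the Lipschitz bound by the oscillation
bound gives `|f x - f y|² ≤ 2π (cos α₂ - cos α₁) |y - x|`. Finally `cos² α_n = 1/(1 + α_n²)`,
and `α_n` is close to `(n + 1/2)π`, which makes `2π (cos α₂ - cos α₁) ≤ 2.26`.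
-/

open Real Set

lemma abs_sub_le_sqrt_of_hasDerivAt_mem_Icc {f f' : ℝ → ℝ} {p q L : ℝ}
    (hf : ∀ t ∈ Icc p q, HasDerivAt f (f' t) t) (hf' : ∀ t ∈ Icc p q, f' t ∈ Icc (-L) 0)
    {x y : ℝ} (hx : x ∈ Icc p q) (hy : y ∈ Icc p q) :
    |f x - f y| ≤ √(L * (f p - f q) * |y - x|) := by
  have hanti : AntitoneOn f (Icc p q) :=
    antitoneOn_of_hasDerivWithinAt_nonpos (convex_Icc p q)
      (fun t ht => (hf t ht).continuousAt.continuousWithinAt)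
      (fun t ht => (hf t (interior_subset ht)).hasDerivWithinAt)
      (fun t ht => (hf' t (interior_subset ht)).2)
  have hpq : p ≤ q := hx.1.trans hx.2
  have hosc : |f x - f y| ≤ f p - f q :=
    abs_sub_le_of_le_of_le (hanti hx (right_mem_Icc.2 hpq) hx.2)
      (hanti (left_mem_Icc.2 hpq) hx hx.1) (hanti hy (right_mem_Icc.2 hpq) hy.2)
      (hanti (left_mem_Icc.2 hpq) hy hy.1)
  have hlip : |f x - f y| ≤ L * |y - x| := by
    rw [abs_sub_comm]
    simpa only [Real.norm_eq_abs] using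
      (convex_Icc p q).norm_image_sub_le_of_norm_hasDerivWithin_le
        (fun t ht => (hf t ht).hasDerivWithinAt)
        (fun t ht => abs_le.2 ⟨(hf' t ht).1, by linarith [(hf' t ht).1, (hf' t ht).2]⟩) hx hy
  refine Real.le_sqrt_of_sq_le ?_
  calc |f x - f y| ^ 2 = |f x - f y| * |f x - f y| := sq _
    _ ≤ (f p - f q) * (L * |y - x|) :=
      mul_le_mul hosc hlip (abs_nonneg _) ((abs_nonneg _).trans hosc)
    _ = L * (f p - f q) * |y - x| := by ring

noncomputable def sinSubMulCos (t : ℝ) : ℝ := sin t - t * cos t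

lemma hasDerivAt_sinSubMulCos (t : ℝ) : HasDerivAt sinSubMulCos (t * sin t) t := by
  refine ((hasDerivAt_sin t).sub ((hasDerivAt_id t).mul (hasDerivAt_cos t))).congr_deriv ?_
  simp only [id_eq]
  ring

lemma hasDerivAt_mul_sin_one_div {t : ℝ} (ht : t ≠ 0) :
    HasDerivAt (fun x => x * sin (1 / x)) (sinSubMulCos (1 / t)) t := by
  have hinv : HasDerivAt (fun x : ℝ => 1 / x) (-(1 / t ^ 2)) t := by
    simpa only [one_div] using hasDerivAt_inv ht
  refine ((hasDerivAt_id t).mul ((hasDerivAt_sin (1 / t)).comp t hinv)).congr_deriv ?_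
  simp only [sinSubMulCos, id_eq, Function.comp_apply]
  field_simp
  ring

lemma sinSubMulCos_antitoneOn : AntitoneOn sinSubMulCos (Icc π (2 * π)) := by
  refine antitoneOn_of_hasDerivWithinAt_nonpos (convex_Icc _ _)
    (fun t _ => (hasDerivAt_sinSubMulCos t).continuousAt.continuousWithinAt)
    (fun t _ => (hasDerivAt_sinSubMulCos t).hasDerivWithinAt) fun t ht => ?_
  rw [interior_Icc] at ht
  have hsin : sin t ≤ 0 := by
    have := sin_nonneg_of_nonneg_of_le_pi (x := t - π) (by linarith [ht.1]) (by linarith [ht.2])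
    rw [sin_sub_pi] at this
    linarith
  nlinarith [pi_pos, ht.1]

lemma sinSubMulCos_monotoneOn : MonotoneOn sinSubMulCos (Icc (2 * π) (3 * π)) := by
  refine monotoneOn_of_hasDerivWithinAt_nonneg (convex_Icc _ _)
    (fun t _ => (hasDerivAt_sinSubMulCos t).continuousAt.continuousWithinAt)
    (fun t _ => (hasDerivAt_sinSubMulCos t).hasDerivWithinAt) fun t ht => ?_
  rw [interior_Icc] at ht
  have hsin : 0 ≤ sin t := by
    have := sin_nonneg_of_nonneg_of_le_pi (x := t - 2 * π)
      (by linarith [ht.1]) (by linarith [ht.2])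
    rwa [sin_sub_two_pi] at this
  nlinarith [pi_pos, ht.1]

lemma sinSubMulCos_two_pi : sinSubMulCos (2 * π) = -(2 * π) := by
  simp [sinSubMulCos]

lemma sinSubMulCos_mem_Icc_of_mem_Icc {a b u : ℝ} (ha : a ∈ Icc π (2 * π))
    (hb : b ∈ Icc (2 * π) (3 * π)) (ha0 : sinSubMulCos a = 0) (hb0 : sinSubMulCos b = 0)
    (hu : u ∈ Icc a b) : sinSubMulCos u ∈ Icc (-(2 * π)) 0 := by
  rw [← sinSubMulCos_two_pi]
  rcases le_total u (2 * π) with hu2 | hu2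
  · have hu' : u ∈ Icc π (2 * π) := ⟨ha.1.trans hu.1, hu2⟩
    exact ⟨sinSubMulCos_antitoneOn hu' (right_mem_Icc.2 (by linarith [pi_pos])) hu2,
      ha0 ▸ sinSubMulCos_antitoneOn ha hu' hu.1⟩
  · have hu' : u ∈ Icc (2 * π) (3 * π) := ⟨hu2, hu.2.trans hb.2⟩
    exact ⟨sinSubMulCos_monotoneOn (left_mem_Icc.2 (by linarith [pi_pos])) hu' hu2,
      hb0 ▸ sinSubMulCos_monotoneOn hu' hb hu.2⟩

lemma one_div_mul_sin_of_sinSubMulCos_eq_zero {r : ℝ} (hr : r ≠ 0) (h : sinSubMulCos r = 0) :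
    1 / r * sin (1 / (1 / r)) = cos r := by
  rw [one_div_one_div, sub_eq_zero.1 h]
  field_simp

lemma abs_cos_lt_one_div_of_sinSubMulCos_eq_zero {r : ℝ} (hr : 0 < r) (h : sinSubMulCos r = 0) :
    |cos r| < 1 / r := by
  have hcos : cos r ^ 2 * (1 + r ^ 2) = 1 := by
    linear_combination sin_sq_add_cos_sq r - (sin r + r * cos r) * sub_eq_zero.1 h
  rw [lt_div_iff₀ hr, ← pow_lt_one_iff_of_nonneg (by positivity) two_ne_zero, mul_pow, sq_abs]
  nlinarith [sq_nonneg (cos r)]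

/-- With `β = (n + 1/2)π - r`, the root equation becomes `tan β = 1 / r`, and `β < tan β`. -/
lemma sub_one_div_lt_of_sinSubMulCos_eq_zero {n : ℕ} (hn : 1 ≤ n) {r : ℝ}
    (hr : r ∈ Ioo (n * π) (n * π + π / 2)) (h : sinSubMulCos r = 0) :
    (n + 1 / 2) * π - 1 / (n * π) < r := by
  have hnπ : 0 < n * π := by positivity
  set β := (n + 1 / 2) * π - r with hβ
  have hβ0 : 0 < β := by linarith [hr.2]
  have hβπ : β < π / 2 := by linarith [hr.1]
  have hr_eq : r = (π / 2 - β) + n * π := by rw [hβ]; ring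
  have hsin : sin r = (-1) ^ n * cos β := by rw [hr_eq, sin_add_nat_mul_pi, sin_pi_div_two_sub]
  have hcos : cos r = (-1) ^ n * sin β := by rw [hr_eq, cos_add_nat_mul_pi, cos_pi_div_two_sub]
  have hcosβ : cos β = r * sin β := by
    have := sub_eq_zero.1 h
    rw [hsin, hcos] at this
    have hsign : (-1 : ℝ) ^ n ≠ 0 := pow_ne_zero n (by norm_num)
    exact mul_left_cancel₀ hsign (by linear_combination this)
  have htan : tan β = 1 / r := by
    rw [tan_eq_sin_div_cos, hcosβ]
    field_simp [(sin_pos_of_pos_of_lt_pi hβ0 (by linarith)).ne']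
  have hr_inv : 1 / r < 1 / (n * π) := one_div_lt_one_div_of_lt hnπ hr.1
  linarith [lt_tan hβ0 hβπ]

lemma two_pi_mul_cos_sub_cos_le {a b : ℝ} (ha : a ∈ Ioo π (π + π / 2))
    (hb : b ∈ Ioo (2 * π) (2 * π + π / 2)) (ha0 : sinSubMulCos a = 0)
    (hb0 : sinSubMulCos b = 0) : 2 * π * (cos b - cos a) ≤ 2.26 := by
  have hπ₁ := pi_gt_d2
  have hπ₂ := pi_lt_d2
  have ha' := sub_one_div_lt_of_sinSubMulCos_eq_zero (n := 1) le_rfl (by simpa using ha) ha0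
  have hb' := sub_one_div_lt_of_sinSubMulCos_eq_zero (n := 2) one_le_two (by simpa using hb) hb0
  have hinvπ : 1 / π < 0.3185 := by rw [div_lt_iff₀ pi_pos]; linarith
  have hinv2π : 1 / (2 * π) < 0.1593 := by rw [div_lt_iff₀ (by positivity)]; linarith
  simp only [Nat.cast_one, Nat.cast_ofNat, one_mul] at ha' hb'
  have hcosa : |cos a| < 0.2278 := by
    refine (abs_cos_lt_one_div_of_sinSubMulCos_eq_zero (by linarith [ha.1]) ha0).trans ?_
    rw [div_lt_iff₀ (by linarith [ha.1])]
    linarith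
  have hcosb : |cos b| < 0.1301 := by
    refine (abs_cos_lt_one_div_of_sinSubMulCos_eq_zero (by linarith [hb.1]) hb0).trans ?_
    rw [div_lt_iff₀ (by linarith [hb.1])]
    linarith
  have hdiff : cos b - cos a ≤ 0.3579 := by linarith [le_abs_self (cos b), neg_abs_le (cos a)]
  nlinarith

theorem holder_first_interval (α : ℕ → ℝ)
    (hα : ∀ n : ℕ, 1 ≤ n →
      α n ∈ Set.Ioo (n * Real.pi) (n * Real.pi + Real.pi / 2) ∧
        Real.sin (α n) - α n * Real.cos (α n) = 0)
    (x y : ℝ) (hx : x ∈ Set.Icc (1 / α 2) (1 / α 1))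
    (hy : y ∈ Set.Icc (1 / α 2) (1 / α 1)) :
    |x * Real.sin (1 / x) - y * Real.sin (1 / y)| ≤ Real.sqrt (2.26 * |y - x|) := by
  obtain ⟨ha, ha0⟩ := hα 1 le_rfl
  obtain ⟨hb, hb0⟩ := hα 2 one_le_two
  replace ha : α 1 ∈ Ioo π (π + π / 2) := by simpa using ha
  replace hb : α 2 ∈ Ioo (2 * π) (2 * π + π / 2) := by simpa using hb
  have ha_pos : 0 < α 1 := pi_pos.trans ha.1
  have hb_pos : 0 < α 2 := by linarith [pi_pos, hb.1]
  have hinv : ∀ t ∈ Icc (1 / α 2) (1 / α 1), 0 < t ∧ 1 / t ∈ Icc (α 1) (α 2) := by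
    intro t ht
    have ht0 : 0 < t := (one_div_pos.2 hb_pos).trans_le ht.1
    exact ⟨ht0, (le_one_div ht0 ha_pos).1 ht.2, (one_div_le hb_pos ht0).1 ht.1⟩
  have hholder := abs_sub_le_sqrt_of_hasDerivAt_mem_Icc (L := 2 * π)
    (fun t ht => hasDerivAt_mul_sin_one_div (hinv t ht).1.ne')
    (fun t ht => sinSubMulCos_mem_Icc_of_mem_Icc ⟨ha.1.le, by linarith [ha.2]⟩
      ⟨hb.1.le, by linarith [hb.2]⟩ ha0 hb0 (hinv t ht).2) hx hy
  rw [one_div_mul_sin_of_sinSubMulCos_eq_zero hb_pos.ne' hb0,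
    one_div_mul_sin_of_sinSubMulCos_eq_zero ha_pos.ne' ha0] at hholder
  exact hholder.trans <| Real.sqrt_le_sqrt <| mul_le_mul_of_nonneg_right
    (two_pi_mul_cos_sub_cos_le ha hb ha0 hb0) (abs_nonneg _)
end

section
/- For all real x ≥ 1/π and y ≥ 1/π, |x·sin(1/x) − y·sin(1/y)| ≤ √(2·|y − x|). -/
/-!
For `t = 1/x ∈ (0, π]` we have `x sin (1/x) = sin t / t`, and `|t cos t - sin t| ≤ t² / 2` on `[0, π]`
bounds the derivative of `sin t / t` by `1/2` there. Hence
`|x sin (1/x) - y sin (1/y)| ≤ |1/x - 1/y| / 2 = |y - x| / (2xy)`, and this is at most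
`√(2|y - x|)` as soon as `|y - x| ≤ 8 (xy)²`, which holds for `x, y ≥ 1/π` because `π³ < 32`.
-/

open Real Set

lemma hasDerivAt_sin_sub_mul_cos (t : ℝ) :
    HasDerivAt (fun u => sin u - u * cos u) (t * sin t) t :=
  ((hasDerivAt_sin t).sub ((hasDerivAt_id' t).mul (hasDerivAt_cos t))).congr_deriv (by ring)

lemma mul_cos_le_sin {t : ℝ} (h0 : 0 ≤ t) (hπ : t ≤ π) : t * cos t ≤ sin t := by
  have hmono : MonotoneOn (fun u => sin u - u * cos u) (Icc 0 π) := by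
    refine monotoneOn_of_hasDerivWithinAt_nonneg (convex_Icc 0 π)
      (fun u _ => (hasDerivAt_sin_sub_mul_cos u).continuousAt.continuousWithinAt)
      (fun u _ => (hasDerivAt_sin_sub_mul_cos u).hasDerivWithinAt) fun u hu => ?_
    rw [interior_Icc] at hu
    exact mul_nonneg hu.1.le (sin_nonneg_of_nonneg_of_le_pi hu.1.le hu.2.le)
  simpa using hmono ⟨le_rfl, pi_pos.le⟩ ⟨h0, hπ⟩ h0

lemma sin_sub_mul_cos_le {t : ℝ} (ht : 0 ≤ t) : sin t - t * cos t ≤ t ^ 2 / 2 := by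
  have hderiv (u : ℝ) :
      HasDerivAt (fun u => u ^ 2 / 2 - (sin u - u * cos u)) (u * (1 - sin u)) u :=
    (((hasDerivAt_pow 2 u).div_const 2).sub (hasDerivAt_sin_sub_mul_cos u)).congr_deriv (by ring)
  have hmono : MonotoneOn (fun u => u ^ 2 / 2 - (sin u - u * cos u)) (Ici 0) := by
    refine monotoneOn_of_hasDerivWithinAt_nonneg (convex_Ici 0)
      (fun u _ => (hderiv u).continuousAt.continuousWithinAt)
      (fun u _ => (hderiv u).hasDerivWithinAt) fun u hu => ?_
    rw [interior_Ici] at hu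
    exact mul_nonneg (le_of_lt hu) (sub_nonneg.2 (sin_le_one u))
  simpa using hmono self_mem_Ici ht ht

lemma abs_sin_div_sub_sin_div_le {a b : ℝ} (ha : a ∈ Ioc 0 π) (hb : b ∈ Ioc 0 π) :
    |sin b / b - sin a / a| ≤ 1 / 2 * |b - a| := by
  refine (convex_Ioc 0 π).norm_image_sub_le_of_norm_hasDerivWithin_le
    (f := fun t => sin t / t) (f' := fun t => (cos t * t - sin t * 1) / t ^ 2)
    (fun t ht => ((hasDerivAt_sin t).div (hasDerivAt_id t) ht.1.ne').hasDerivWithinAt)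
    (fun t ht => ?_) ha hb
  have h₁ := mul_cos_le_sin ht.1.le ht.2
  have h₂ := sin_sub_mul_cos_le ht.1.le
  rw [norm_eq_abs, abs_div, abs_of_nonneg (sq_nonneg t), div_le_iff₀ (pow_pos ht.1 2), abs_le]
  constructor <;> linarith

lemma abs_mul_sin_one_div_sub_le {x y : ℝ} (hx : 1 / π ≤ x) (hy : 1 / π ≤ y) :
    |x * sin (1 / x) - y * sin (1 / y)| ≤ 1 / 2 * (|y - x| / (x * y)) := by
  have hx₀ : 0 < x := (one_div_pos.2 pi_pos).trans_le hx
  have hy₀ : 0 < y := (one_div_pos.2 pi_pos).trans_le hy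
  have mem_Ioc {z : ℝ} (hz₀ : 0 < z) (hz : 1 / π ≤ z) : 1 / z ∈ Ioc 0 π :=
    ⟨one_div_pos.2 hz₀, (one_div_le hz₀ pi_pos).2 hz⟩
  have h := abs_sin_div_sub_sin_div_le (mem_Ioc hy₀ hy) (mem_Ioc hx₀ hx)
  rw [div_sub_div _ _ hx₀.ne' hy₀.ne', abs_div, abs_of_pos (mul_pos hx₀ hy₀)] at h
  simpa only [div_div_eq_mul_div, div_one, mul_comm, one_mul, mul_one] using h

lemma sub_le_eight_mul_sq {x y : ℝ} (hx : 1 / π ≤ x) (hxy : x ≤ y) :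
    y - x ≤ 8 * (x * y) ^ 2 := by
  have hx₀ : 0 ≤ x := (one_div_pos.2 pi_pos).le.trans hx
  have hπx : 1 ≤ π * x := by rwa [div_le_iff₀' pi_pos] at hx
  have hπ : π ^ 3 < 32 :=
    (pow_lt_pow_left₀ pi_lt_d2 pi_pos.le three_ne_zero).trans_le (by norm_num)
  have h32 : 1 ≤ 32 * x ^ 3 := calc
    1 ≤ (π * x) ^ 3 := one_le_pow₀ hπx
    _ = π ^ 3 * x ^ 3 := mul_pow π x 3
    _ ≤ 32 * x ^ 3 := by gcongr
  have amgm : 4 * x * (y - x) ≤ y ^ 2 := by nlinarith [sq_nonneg (y - 2 * x)]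
  calc y - x ≤ 32 * x ^ 3 * (y - x) := le_mul_of_one_le_left (sub_nonneg.2 hxy) h32
    _ = 8 * x ^ 2 * (4 * x * (y - x)) := by ring
    _ ≤ 8 * x ^ 2 * y ^ 2 := by gcongr
    _ = 8 * (x * y) ^ 2 := by ring

lemma div_le_sqrt_two_mul {d p : ℝ} (hp : 0 < p) (hd : 0 ≤ d) (h : d ≤ 8 * p ^ 2) :
    1 / 2 * (d / p) ≤ √(2 * d) := by
  rw [le_sqrt (by positivity) (by positivity),
    show (1 / 2 * (d / p)) ^ 2 = d ^ 2 / (4 * p ^ 2) by ring, div_le_iff₀ (by positivity)]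
  nlinarith

theorem holder_far_from_zero (x y : ℝ) (hx : 1 / Real.pi ≤ x) (hy : 1 / Real.pi ≤ y) :
    |x * Real.sin (1 / x) - y * Real.sin (1 / y)| ≤ Real.sqrt (2 * |y - x|) := by
  have hxy : 0 < x * y :=
    mul_pos ((one_div_pos.2 pi_pos).trans_le hx) ((one_div_pos.2 pi_pos).trans_le hy)
  have hd : |y - x| ≤ 8 * (x * y) ^ 2 := by
    rcases le_total x y with h | h
    · rw [abs_of_nonneg (sub_nonneg.2 h)]
      exact sub_le_eight_mul_sq hx h
    · rw [abs_sub_comm, abs_of_nonneg (sub_nonneg.2 h), mul_comm x y]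
      exact sub_le_eight_mul_sq hy h
  exact (abs_mul_sin_one_div_sub_le hx hy).trans (div_le_sqrt_two_mul hxy (abs_nonneg _) hd)
end

section
/- For every real x ≥ 1/π, x·sin(1/x) ≤ √(2·(x − 1/π)). -/
/-! With `t = 1 / x ∈ (0, π]` the claim squares to `π sin² t ≤ 2 t (π - t)`. Since
`sin² t ≤ |sin t| ≤ t` and `sin t = sin (π - t)`, we have `sin² t ≤ min t (π - t)`, and
`π · min t (π - t) ≤ 2 t (π - t)` because `max t (π - t) ≥ π / 2`. -/

open Real

lemma Real.sin_sq_le_abs (t : ℝ) : sin t ^ 2 ≤ |t| := by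
  calc sin t ^ 2 = |sin t| * |sin t| := by rw [sq, abs_mul_abs_self]
    _ ≤ 1 * |t| := mul_le_mul (abs_sin_le_one t) abs_sin_le_abs (abs_nonneg _) zero_le_one
    _ = |t| := one_mul _

lemma Real.pi_mul_sin_sq_le (t : ℝ) (h₀ : 0 ≤ t) (hπ : t ≤ π) :
    π * sin t ^ 2 ≤ 2 * t * (π - t) := by
  rcases le_total t (π / 2) with hle | hle
  · have hsin : sin t ^ 2 ≤ t := by simpa [abs_of_nonneg h₀] using sin_sq_le_abs t
    nlinarith [pi_pos]
  · have hsin : sin t ^ 2 ≤ π - t := by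
      simpa [sin_pi_sub, abs_of_nonneg (sub_nonneg.2 hπ)] using sin_sq_le_abs (π - t)
    nlinarith [pi_pos]

theorem f_le_sqrt (x : ℝ) (hx : 1 / Real.pi ≤ x) :
    x * Real.sin (1 / x) ≤ Real.sqrt (2 * (x - 1 / Real.pi)) := by
  have hx₀ : 0 < x := (one_div_pos.2 pi_pos).trans_le hx
  have ht : 1 / x ≤ π := by rwa [one_div_le hx₀ pi_pos]
  have key := pi_mul_sin_sq_le (1 / x) (one_div_pos.2 hx₀).le ht
  apply le_sqrt_of_sq_le
  refine le_of_mul_le_mul_left ?_ pi_pos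
  calc π * (x * sin (1 / x)) ^ 2 = x ^ 2 * (π * sin (1 / x) ^ 2) := by ring
    _ ≤ x ^ 2 * (2 * (1 / x) * (π - 1 / x)) := by gcongr
    _ = π * (2 * (x - 1 / π)) := by field_simp
end

section
/- Let J_0 = [1/α_1, ∞) and J_n = [1/α_{n+1}, 1/α_n) for each integer n ≥ 1, and let f(x) = x·sin(1/x). Then the images are nested: f(J_{k+1}) ⊆ f(J_k) for every integer k ≥ 0. -/
/-!
With `φ t = sin t - t cos t` one has `f' x = φ (1 / x)` and `φ' t = t sin t`, so `φ` is injective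
on every `[mπ, (m + 1)π]` and has no zero strictly between `α_n` and `α_{n+1}`. By Rolle, `f` is
then injective on the closure `[1/α_{n+1}, 1/α_n]` of `J_n`, and with the intermediate value
theorem `f(J_n)` is the interval from `f(1/α_{n+1})` (included) to `f(1/α_n)` (excluded).
At a zero of `φ`, `f(1/α) = cos α`, whose sign is `(-1)^n` and whose square `1 / (1 + α²)`
decreases, so `cos α_{k+2}` lies strictly between `cos α_{k+1}` and `cos α_k`. For `J_0` the
intermediate value theorem on `[1/α_1, 2/π]` suffices, as `f(2/π) = 2/π ≥ cos α_2`.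
-/

open Real Set

theorem injOn_Icc_of_hasDerivAt_ne_zero {f f' : ℝ → ℝ} {a b : ℝ}
    (hf : ContinuousOn f (Icc a b)) (hff' : ∀ x ∈ Ioo a b, HasDerivAt f (f' x) x)
    (hf' : ∀ x ∈ Ioo a b, f' x ≠ 0) : InjOn f (Icc a b) := by
  have key : ∀ x ∈ Icc a b, ∀ y ∈ Icc a b, x < y → f x ≠ f y := by
    intro x hx y hy hxy hfxy
    have hsub : Ioo x y ⊆ Ioo a b := Ioo_subset_Ioo hx.1 hy.2
    obtain ⟨c, hc, hc0⟩ := exists_hasDerivAt_eq_zero hxy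
      (hf.mono (Icc_subset_Icc hx.1 hy.2)) hfxy fun c hc => hff' c (hsub hc)
    exact hf' c (hsub hc) hc0
  intro x hx y hy hfxy
  by_contra hne
  rcases lt_or_gt_of_ne hne with h | h
  exacts [key x hx y hy h hfxy, key y hy x hx h hfxy.symm]

theorem image_Ico_eq_uIcc_diff_of_injOn {α δ : Type*} [ConditionallyCompleteLinearOrder α]
    [TopologicalSpace α] [OrderTopology α] [DenselyOrdered α] [LinearOrder δ]
    [TopologicalSpace δ] [OrderClosedTopology δ] {f : α → δ} {a b : α} (hab : a ≤ b)
    (hf : ContinuousOn f (Icc a b)) (hinj : InjOn f (Icc a b)) :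
    f '' Ico a b = uIcc (f a) (f b) \ {f b} := by
  ext y
  constructor
  · rintro ⟨x, hx, rfl⟩
    have hx' : x ∈ Icc a b := Ico_subset_Icc_self hx
    refine ⟨?_, fun h => hx.2.ne (hinj hx' (right_mem_Icc.2 hab) h)⟩
    rcases hf.strictMonoOn_of_injOn_Icc' hab hinj with hmono | hanti
    · exact mem_uIcc_of_le (hmono.monotoneOn (left_mem_Icc.2 hab) hx' hx.1)
        (hmono.monotoneOn hx' (right_mem_Icc.2 hab) hx'.2)
    · exact mem_uIcc_of_ge (hanti.antitoneOn hx' (right_mem_Icc.2 hab) hx'.2)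
        (hanti.antitoneOn (left_mem_Icc.2 hab) hx' hx.1)
  · rintro ⟨hy, hyb⟩
    rw [← uIcc_of_le hab] at hf
    obtain ⟨x, hx, rfl⟩ := intermediate_value_uIcc hf hy
    rw [uIcc_of_le hab] at hx
    exact ⟨x, ⟨hx.1, hx.2.lt_of_ne fun h => hyb (h ▸ rfl)⟩, rfl⟩

theorem uIcc_diff_subset_uIcc_diff {a b c : ℝ} (hab : a * b < 0) (hbc : b * c < 0)
    (hca : c ^ 2 < a ^ 2) : uIcc c b \ {b} ⊆ uIcc b a \ {a} := by
  have key : c ∈ uIcc b a ∧ a ∉ uIcc c b := by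
    rcases lt_or_gt_of_ne (show b ≠ 0 by rintro rfl; simp at hab) with hb | hb
    · have ha : 0 < a := by nlinarith
      have hc : 0 < c := by nlinarith
      have : c < a := by nlinarith
      rw [uIcc_of_le (by linarith : b ≤ a), uIcc_of_ge (by linarith : b ≤ c)]
      exact ⟨⟨by linarith, by linarith⟩, fun h => by linarith [h.2]⟩
    · have ha : a < 0 := by nlinarith
      have hc : c < 0 := by nlinarith
      have : a < c := by nlinarith
      rw [uIcc_of_ge (by linarith : a ≤ b), uIcc_of_le (by linarith : c ≤ b)]
      exact ⟨⟨by linarith, by linarith⟩, fun h => by linarith [h.1]⟩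
  rintro y ⟨hy, -⟩
  exact ⟨uIcc_subset_uIcc key.1 left_mem_uIcc hy, fun h => key.2 (h ▸ hy)⟩

noncomputable def phi (t : ℝ) : ℝ := sin t - t * cos t

theorem hasDerivAt_phi (t : ℝ) : HasDerivAt phi (t * sin t) t :=
  ((hasDerivAt_sin t).sub ((hasDerivAt_id t).mul (hasDerivAt_cos t))).congr_deriv
    (by simp only [id]; ring)

theorem continuous_phi : Continuous phi :=
  continuous_iff_continuousAt.2 fun t => (hasDerivAt_phi t).continuousAt

theorem phi_injOn (n : ℕ) : InjOn phi (Icc (n * π) ((n + 1) * π)) := by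
  refine injOn_Icc_of_hasDerivAt_ne_zero continuous_phi.continuousOn
    (fun t _ => hasDerivAt_phi t) fun t ht => ?_
  have hsin : sin (t - n * π) ≠ 0 :=
    (sin_pos_of_pos_of_lt_pi (by linarith [ht.1]) (by linarith [ht.2])).ne'
  rw [sin_sub_nat_mul_pi] at hsin
  have ht0 : 0 < t := lt_of_le_of_lt (by positivity) ht.1
  exact mul_ne_zero ht0.ne' (right_ne_zero_of_mul hsin)

theorem hasDerivAt_mul_sin_inv {x : ℝ} (hx : x ≠ 0) :
    HasDerivAt (fun x => x * sin (1 / x)) (phi (1 / x)) x := by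
  have hinv : HasDerivAt (fun x : ℝ => 1 / x) (-(1 / x ^ 2)) x := by
    simpa using hasDerivAt_inv hx
  refine ((hasDerivAt_id x).mul ((hasDerivAt_sin (1 / x)).comp x hinv)).congr_deriv ?_
  simp only [id, Function.comp_apply, phi]
  field_simp
  ring

theorem continuousOn_mul_sin_inv : ContinuousOn (fun x : ℝ => x * sin (1 / x)) (Ioi 0) :=
  fun _ hx => (hasDerivAt_mul_sin_inv (ne_of_gt hx)).continuousAt.continuousWithinAt

def IsPhiZero (n : ℕ) (t : ℝ) : Prop :=
  t ∈ Ioo (n * π) (n * π + π / 2) ∧ phi t = 0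

namespace IsPhiZero

variable {m n : ℕ} {a b c t : ℝ}

theorem pos (ht : IsPhiZero n t) : 0 < t :=
  lt_of_le_of_lt (by positivity) ht.1.1

theorem lt (ha : IsPhiZero m a) (hb : IsPhiZero n b) (hmn : m < n) : a < b := by
  have hmn' : (m : ℝ) + 1 ≤ n := by exact_mod_cast hmn
  nlinarith [ha.1.2, hb.1.1, pi_pos]

theorem phi_ne_zero (ha : IsPhiZero n a) (hb : IsPhiZero (n + 1) b) (ht : t ∈ Ioo a b) :
    phi t ≠ 0 := by
  obtain ⟨⟨ha₁, ha₂⟩, ha0⟩ := ha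
  obtain ⟨⟨hb₁, hb₂⟩, hb0⟩ := hb
  push_cast at hb₁ hb₂
  have hπ := pi_pos
  intro ht0
  rcases le_total t ((n + 1) * π) with h | h
  · exact ht.1.ne' (phi_injOn n ⟨by linarith [ht.1], h⟩ ⟨ha₁.le, by linarith⟩
      (ht0.trans ha0.symm))
  · refine ht.2.ne (phi_injOn (n + 1) ?_ ?_ (ht0.trans hb0.symm)) <;> push_cast <;>
      constructor <;> linarith [ht.2]

theorem mul_sin_inv_eq_cos (ht : IsPhiZero n t) : 1 / t * sin (1 / (1 / t)) = cos t := by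
  have h : sin t = t * cos t := sub_eq_zero.1 ht.2
  rw [one_div_one_div, h]
  field_simp [ht.pos.ne']

theorem cos_sq_eq (ht : IsPhiZero n t) : cos t ^ 2 = 1 / (1 + t ^ 2) := by
  have h : sin t = t * cos t := sub_eq_zero.1 ht.2
  rw [eq_div_iff (by positivity)]
  calc cos t ^ 2 * (1 + t ^ 2) = cos t ^ 2 + (t * cos t) ^ 2 := by ring
    _ = 1 := by rw [← h, cos_sq_add_sin_sq]

theorem cos_sq_lt (ha : IsPhiZero m a) (hb : IsPhiZero n b) (hmn : m < n) :
    cos b ^ 2 < cos a ^ 2 := by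
  rw [ha.cos_sq_eq, hb.cos_sq_eq]
  exact one_div_lt_one_div_of_lt (by positivity) (by nlinarith [ha.pos, ha.lt hb hmn])

theorem neg_one_pow_mul_cos_pos (ht : IsPhiZero n t) : 0 < (-1) ^ n * cos t := by
  rw [← cos_sub_nat_mul_pi]
  exact cos_pos_of_mem_Ioo ⟨by linarith [ht.1.1, pi_pos], by linarith [ht.1.2]⟩

theorem cos_mul_cos_neg (ha : IsPhiZero n a) (hb : IsPhiZero (n + 1) b) :
    cos a * cos b < 0 := by
  have h := mul_pos ha.neg_one_pow_mul_cos_pos hb.neg_one_pow_mul_cos_pos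
  have hsign : ((-1 : ℝ) ^ n * (-1) ^ (n + 1)) = -1 := by
    rw [← pow_add, (by omega : n + (n + 1) = 2 * n + 1), pow_succ, pow_mul]; norm_num
  nlinarith

theorem image_Ico (ha : IsPhiZero n a) (hb : IsPhiZero (n + 1) b) :
    (fun x => x * sin (1 / x)) '' Ico (1 / b) (1 / a) = uIcc (cos b) (cos a) \ {cos a} := by
  have ha0 := ha.pos
  have hb0 := hb.pos
  have hpos : Icc (1 / b) (1 / a) ⊆ Ioi 0 := fun x hx => lt_of_lt_of_le (by positivity) hx.1
  have hcont := continuousOn_mul_sin_inv.mono hpos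
  have hinj : InjOn (fun x => x * sin (1 / x)) (Icc (1 / b) (1 / a)) := by
    refine injOn_Icc_of_hasDerivAt_ne_zero hcont
      (fun x hx => hasDerivAt_mul_sin_inv (hpos (Ioo_subset_Icc_self hx)).ne') fun x hx => ?_
    have hx0 : 0 < x := hpos (Ioo_subset_Icc_self hx)
    exact ha.phi_ne_zero hb ⟨(lt_one_div ha0 hx0).2 hx.2, (one_div_lt hx0 hb0).2 hx.1⟩
  rw [image_Ico_eq_uIcc_diff_of_injOn (one_div_le_one_div_of_le ha0 (ha.lt hb n.lt_succ_self).le)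
    hcont hinj, ha.mul_sin_inv_eq_cos, hb.mul_sin_inv_eq_cos]

theorem image_Ico_subset_image_Ico (ha : IsPhiZero n a) (hb : IsPhiZero (n + 1) b)
    (hc : IsPhiZero (n + 2) c) :
    (fun x => x * sin (1 / x)) '' Ico (1 / c) (1 / b) ⊆
      (fun x => x * sin (1 / x)) '' Ico (1 / b) (1 / a) := by
  rw [ha.image_Ico hb, hb.image_Ico hc]
  exact uIcc_diff_subset_uIcc_diff (ha.cos_mul_cos_neg hb) (hb.cos_mul_cos_neg hc)
    (ha.cos_sq_lt hc (by omega))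

theorem image_Ico_subset_image_Ici (ha : IsPhiZero 1 a) (hb : IsPhiZero 2 b) :
    (fun x => x * sin (1 / x)) '' Ico (1 / b) (1 / a) ⊆
      (fun x => x * sin (1 / x)) '' Ici (1 / a) := by
  have hπ := pi_pos
  have hcos_a : cos a < 0 := by simpa using ha.neg_one_pow_mul_cos_pos
  have hcos_b : 0 < cos b := by simpa using hb.neg_one_pow_mul_cos_pos
  have hb_gt : 2 * π < b := by simpa using hb.1.1
  have hcos_b_le : cos b ≤ 2 / π := by
    have hsin : b * cos b ≤ 1 := (sub_eq_zero.1 hb.2) ▸ sin_le_one b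
    rw [le_div_iff₀ hπ]
    nlinarith
  have ha_le : 1 / a ≤ 2 / π := by
    have : π < a := by simpa using ha.1.1
    rw [div_le_div_iff₀ ha.pos hπ]
    linarith
  have hf : (2 / π) * sin (1 / (2 / π)) = 2 / π := by simp
  rw [ha.image_Ico hb]
  rintro y ⟨hy, -⟩
  have hy' : y ∈ uIcc (cos a) (2 / π) :=
    uIcc_subset_uIcc (mem_uIcc_of_le (hcos_a.trans hcos_b).le hcos_b_le) left_mem_uIcc hy
  rw [← ha.mul_sin_inv_eq_cos, ← hf] at hy'
  have hcont : ContinuousOn (fun x => x * sin (1 / x)) (uIcc (1 / a) (2 / π)) := by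
    refine continuousOn_mul_sin_inv.mono fun x hx => ?_
    rw [uIcc_of_le ha_le] at hx
    exact lt_of_lt_of_le (one_div_pos.2 ha.pos) hx.1
  obtain ⟨x, hx, rfl⟩ := intermediate_value_uIcc hcont hy'
  exact ⟨x, (uIcc_of_le ha_le ▸ hx).1, rfl⟩

end IsPhiZero

theorem nested_images (α : ℕ → ℝ)
    (hα : ∀ n : ℕ, 1 ≤ n →
      α n ∈ Set.Ioo (n * Real.pi) (n * Real.pi + Real.pi / 2) ∧
        Real.sin (α n) - α n * Real.cos (α n) = 0)
    (J : ℕ → Set ℝ)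
    (hJ0 : J 0 = Set.Ici (1 / α 1))
    (hJ : ∀ n : ℕ, 1 ≤ n → J n = Set.Ico (1 / α (n + 1)) (1 / α n)) :
    ∀ k : ℕ, (fun x => x * Real.sin (1 / x)) '' J (k + 1) ⊆
      (fun x => x * Real.sin (1 / x)) '' J k := by
  have hzero : ∀ n, 1 ≤ n → IsPhiZero n (α n) := hα
  rintro (_ | k)
  · rw [hJ0, hJ 1 le_rfl]
    exact (hzero 1 le_rfl).image_Ico_subset_image_Ici (hzero 2 (by norm_num))
  · rw [hJ (k + 1 + 1) (by omega), hJ (k + 1) (by omega)]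
    exact (hzero (k + 1) (by omega)).image_Ico_subset_image_Ico (hzero (k + 2) (by omega))
      (hzero (k + 3) (by omega))
end
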